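/- (Strong convexity of the isotropic tensors) Let 𝓟, 𝓟^h, 𝓠 be the isotropic nanoplate tensors built from Lamé moduli μ, λ and material length scales l₀, l₁, l₂ > 0, and suppose μ(x) ≥ α₀ > 0 and 2μ(x) + 3λ(x) ≥ γ₀ > 0 a.e. in Ω. Then the coefficients satisfy a_i(x) ≥ t l² (2/15)α₀ for i = 0,1,2 and b_j(x) ≥ t³ l² (1/30)α₀ for j = 0,1 a.e. in Ω, and there exist positive constants ξ_𝓟, ξ_𝓠 depending only on α₀ and γ₀ such that, for almost every x ∈ Ω, (𝓟(x)+𝓟^h(x))A·A ≥ t(t²+l²)ξ_𝓟|A|² for every A ∈ M̂² and 𝓠(x)B·B ≥ t³l²ξ_𝓠|B|² for every B ∈ M̂³, where l = min{l₀,l₁,l₂} and t is the plate thickness. -/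

import Mathlib

open MeasureTheory Metric Set
noncomputable section

/-- The plane `ℝ²`. -/
abbrev E2 : Type := EuclideanSpace ℝ (Fin 2)

/-- Components of a `k`-th order tensor on `ℝ²`. -/
abbrev Tens (k : ℕ) : Type := (Fin k → Fin 2) → ℝ

/-- Components of a linear map acting on `k`-th order tensors. -/
abbrev TComp (k : ℕ) : Type := (Fin k → Fin 2) → (Fin k → Fin 2) → ℝ

/-- Scalar product `A · B` of tensors. -/
def tdot {k : ℕ} (A B : Tens k) : ℝ := ∑ i : Fin k → Fin 2, A i * B i

/-- Squared norm `|A|²` of a tensor. -/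
def tnorm2 {k : ℕ} (A : Tens k) : ℝ := tdot A A

/-- A tensor is symmetric if invariant under permutations of the indices. -/
def IsSym {k : ℕ} (A : Tens k) : Prop :=
  ∀ (σ : Equiv.Perm (Fin k)) (i : Fin k → Fin 2), A (i ∘ σ) = A i

/-- Action `(𝕂 A)_i = ∑_j K_{ij} A_j` of a tensor map on a tensor. -/
def tapply {k : ℕ} (K : TComp k) (A : Tens k) : Tens k :=
  fun i => ∑ j : Fin k → Fin 2, K i j * A j

/-- Quadratic form `𝕂A·A`. -/
def qf {k : ℕ} (K : TComp k) (A : Tens k) : ℝ := tdot (tapply K A) A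

/-- Symmetry condition `𝕂A·B = 𝕂B·A` on symmetric tensors. -/
def MapSym {k : ℕ} (K : TComp k) : Prop :=
  ∀ A B : Tens k, IsSym A → IsSym B → tdot (tapply K A) B = tdot (tapply K B) A

/-- Components of the `k`-th derivative `D^k u (x)`. -/
def Dt (k : ℕ) (u : E2 → ℝ) (x : E2) : Tens k :=
  fun i => iteratedFDeriv ℝ k u x (fun j => EuclideanSpace.single (i j) (1:ℝ))

/-- Membership in (the classical version of) `H^k(Ω)`. -/
def MemHk (k : ℕ) (Ω : Set E2) (u : E2 → ℝ) : Prop :=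
  ∀ i ≤ k, IntegrableOn (fun x => ‖iteratedFDeriv ℝ i u x‖ ^ 2) Ω

/-- The normalized (dimensionally homogeneous) `H^k(Ω)` norm. -/
def sobNorm (r0 : ℝ) (k : ℕ) (Ω : Set E2) (u : E2 → ℝ) : ℝ :=
  r0⁻¹ * Real.sqrt (∑ i ∈ Finset.range (k + 1),
    r0 ^ (2 * i) * ∫ x in Ω, ‖iteratedFDeriv ℝ i u x‖ ^ 2)

/-- The bilinear form of the nanoplate problem:
`a(u,w) = ∫_Ω (𝓟+𝓟^h)D²u·D²w + 𝓠 D³u·D³w`. -/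
def aForm (PPh : E2 → TComp 2) (Q : E2 → TComp 3) (Ω : Set E2) (u w : E2 → ℝ) : ℝ :=
  ∫ x in Ω, (tdot (tapply (PPh x) (Dt 2 u x)) (Dt 2 w x)
    + tdot (tapply (Q x) (Dt 3 u x)) (Dt 3 w x))

open Classical in
/-- Coefficient field `χ_{Ω∖D} K + χ_D K̃` in the presence of an inclusion `D`. -/
def mixF {k : ℕ} (D : Set E2) (K Kt : E2 → TComp k) : E2 → TComp k :=
  fun x => if x ∈ D then Kt x else K x

/-- Affine functions on `ℝ²`. -/
def IsAffine (w : E2 → ℝ) : Prop :=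
  ∃ a b c : ℝ, ∀ x : E2, w x = a * x 0 + b * x 1 + c

/-- Normalization conditions `∫_Ω u = 0`, `∫_Ω u_{,α} = 0`. -/
def Normalized (Ω : Set E2) (u : E2 → ℝ) : Prop :=
  (∫ x in Ω, u x) = 0 ∧
  ∀ α : Fin 2, (∫ x in Ω, fderiv ℝ u x (EuclideanSpace.single α (1:ℝ))) = 0

/-- Normalized weak solution of the Neumann problem with work functional `L`. -/
def WeakSol (PPh : E2 → TComp 2) (Q : E2 → TComp 3) (Ω : Set E2)
    (L : (E2 → ℝ) → ℝ) (u : E2 → ℝ) : Prop :=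
  MemHk 3 Ω u ∧ Normalized Ω u ∧
  ∀ w : E2 → ℝ, MemHk 3 Ω w → aForm PPh Q Ω u w = L w

/-- The compatibility conditions on the boundary data: the work functional
vanishes on (infinitesimal rigid) affine displacements. -/
def Compat (L : (E2 → ℝ) → ℝ) : Prop := ∀ w : E2 → ℝ, IsAffine w → L w = 0

/-- `N` bounds the dual norm of the work functional `L` against the `H^k(Ω)` norm;
this encodes the norms of the boundary data in the appropriate negative Sobolev spaces. -/
def LBound (r0 : ℝ) (k : ℕ) (Ω : Set E2) (L : (E2 → ℝ) → ℝ) (N : ℝ) : Prop :=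
  ∀ w : E2 → ℝ, MemHk k Ω w → |L w| ≤ N * sobNorm r0 k Ω w

/-- A bounded domain of `ℝ²`. -/
def BoundedDomain (Ω : Set E2) : Prop :=
  IsOpen Ω ∧ IsConnected Ω ∧ Bornology.IsBounded Ω

/-- `∂Ω` is of class `C^{k,1}` with constants `r0`, `M0`. -/
def BoundaryCk1 (k : ℕ) (r0 M0 : ℝ) (Ω : Set E2) : Prop :=
  ∀ P ∈ frontier Ω, ∃ φ : E2 ≃ᵢ E2, ∃ g : ℝ → ℝ,
    φ P = 0 ∧ g 0 = 0 ∧ deriv g 0 = 0 ∧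
    (∀ x : E2, |φ x 0| < r0 → |φ x 1| < 2 * M0 * r0 → (x ∈ Ω ↔ g (φ x 0) < φ x 1)) ∧
    ContDiffOn ℝ k g (Icc (-r0) r0) ∧
    (∀ i ≤ k, ∀ y ∈ Icc (-r0) r0,
      r0 ^ i * |iteratedDerivWithin i g (Icc (-r0) r0) y| ≤ M0 * r0) ∧
    ∃ K : NNReal, r0 ^ (k + 1) * (K : ℝ) ≤ M0 * r0 ∧
      LipschitzOnWith K (iteratedDerivWithin k g (Icc (-r0) r0)) (Icc (-r0) r0)

/-- `C^{k,1}` bound with constant `M` for a field on `S` with values in a normed space. -/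
def CkLipBound {X : Type*} [NormedAddCommGroup X] [NormedSpace ℝ X]
    (k : ℕ) (f : E2 → X) (S : Set E2) (M : ℝ) : Prop :=
  ContDiffOn ℝ k f S ∧
  (∀ i ≤ k, ∀ x ∈ S, ‖iteratedFDerivWithin ℝ i f S x‖ ≤ M) ∧
  ∃ K : NNReal, (K : ℝ) ≤ M ∧ LipschitzOnWith K (iteratedFDerivWithin ℝ k f S) S

/-- Stiff-inclusion jump conditions. -/
def JumpStiff (Ω : Set E2) (PPh PtPth : E2 → TComp 2) (Q Qt : E2 → TComp 3)
    (η ηb δ δb : ℝ) : Prop :=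
  0 < η ∧ 0 < ηb ∧ 1 < δ ∧ 1 < δb ∧
  (∀ᵐ x ∂(volume.restrict Ω), ∀ A : Tens 2, IsSym A →
    η * qf (PPh x) A ≤ qf (PtPth x - PPh x) A ∧
      qf (PtPth x - PPh x) A ≤ (δ - 1) * qf (PPh x) A) ∧
  (∀ᵐ x ∂(volume.restrict Ω), ∀ B : Tens 3, IsSym B →
    ηb * qf (Q x) B ≤ qf (Qt x - Q x) B ∧
      qf (Qt x - Q x) B ≤ (δb - 1) * qf (Q x) B)

/-- Soft-inclusion jump conditions. -/
def JumpSoft (Ω : Set E2) (PPh PtPth : E2 → TComp 2) (Q Qt : E2 → TComp 3)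
    (η ηb δ δb : ℝ) : Prop :=
  0 < η ∧ 0 < ηb ∧ 0 < δ ∧ δ < 1 ∧ 0 < δb ∧ δb < 1 ∧
  (∀ᵐ x ∂(volume.restrict Ω), ∀ A : Tens 2, IsSym A →
    η * qf (PPh x) A ≤ qf (PPh x - PtPth x) A ∧
      qf (PPh x - PtPth x) A ≤ (1 - δ) * qf (PPh x) A) ∧
  (∀ᵐ x ∂(volume.restrict Ω), ∀ B : Tens 3, IsSym B →
    ηb * qf (Q x) B ≤ qf (Q x - Qt x) B ∧
      qf (Q x - Qt x) B ≤ (1 - δb) * qf (Q x) B)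

/-- Kronecker delta on `Fin 2`. -/
def kron (i j : Fin 2) : ℝ := if i = j then 1 else 0

/-- Poisson coefficient `ν = λ/(2(μ+λ))`. -/
def nuF (μ lam : E2 → ℝ) (x : E2) : ℝ := lam x / (2 * (μ x + lam x))

/-- Young modulus `E = μ(2μ+3λ)/(μ+λ)`. -/
def EyF (μ lam : E2 → ℝ) (x : E2) : ℝ := μ x * (2 * μ x + 3 * lam x) / (μ x + lam x)

/-- Bending stiffness `B = t³E/(12(1-ν²))`. -/
def BF (μ lam : E2 → ℝ) (t : ℝ) (x : E2) : ℝ :=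
  t ^ 3 * EyF μ lam x / (12 * (1 - nuF μ lam x ^ 2))

def a0F (μ : E2 → ℝ) (t l0 : ℝ) (x : E2) : ℝ := 2 * μ x * t * l0 ^ 2
def a1F (μ : E2 → ℝ) (t l1 : ℝ) (x : E2) : ℝ := (2 / 15) * μ x * t * l1 ^ 2
def a2F (μ : E2 → ℝ) (t l2 : ℝ) (x : E2) : ℝ := μ x * t * l2 ^ 2
def b0F (μ : E2 → ℝ) (t l0 : ℝ) (x : E2) : ℝ := 2 * μ x * (t ^ 3 / 12) * l0 ^ 2
def b1F (μ : E2 → ℝ) (t l1 : ℝ) (x : E2) : ℝ := (2 / 5) * μ x * (t ^ 3 / 12) * l1 ^ 2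

/-- The isotropic tensor `𝓟`. -/
def isoP (μ lam : E2 → ℝ) (t : ℝ) : E2 → TComp 2 := fun x i j =>
  BF μ lam t x * ((1 - nuF μ lam x) * kron (i 0) (j 0) * kron (i 1) (j 1)
    + nuF μ lam x * kron (i 0) (i 1) * kron (j 0) (j 1))

/-- The isotropic tensor `𝓟^h`. -/
def isoPh (μ : E2 → ℝ) (t l0 l1 l2 : ℝ) : E2 → TComp 2 := fun x i j =>
  (2 * a2F μ t l2 x + 5 * a1F μ t l1 x) * kron (i 0) (j 0) * kron (i 1) (j 1)
  + (-a1F μ t l1 x - a2F μ t l2 x + a0F μ t l0 x) * kron (i 0) (i 1) * kron (j 0) (j 1)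

/-- The isotropic sixth-order tensor `𝓠` (with coefficients `Q₈`, `Q₉`). -/
def isoQ (μ : E2 → ℝ) (t l0 l1 : ℝ) (Q8 Q9 : E2 → ℝ) : E2 → TComp 3 := fun x I J =>
  (1 / 3) * (b0F μ t l0 x - 3 * b1F μ t l1 x)
      * kron (I 0) (I 1) * kron (I 2) (J 2) * kron (J 0) (J 1)
  + (1 / 6) * (b0F μ t l0 x - 3 * b1F μ t l1 x) *
      (kron (I 0) (I 2) * (kron (I 1) (J 0) * kron (J 1) (J 2) + kron (I 1) (J 1) * kron (J 0) (J 2))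
        + kron (I 1) (I 2) * (kron (I 0) (J 0) * kron (J 1) (J 2) + kron (I 0) (J 1) * kron (J 0) (J 2)))
  + Q8 x * (kron (I 2) (J 2) * (kron (I 0) (J 0) * kron (I 1) (J 1) + kron (I 0) (J 1) * kron (I 1) (J 0)))
  + Q9 x * (kron (I 1) (J 2) * (kron (I 0) (J 0) * kron (I 2) (J 1) + kron (I 0) (J 1) * kron (I 2) (J 0))
      + kron (I 0) (J 2) * (kron (I 1) (J 0) * kron (I 2) (J 1) + kron (I 1) (J 1) * kron (I 2) (J 0)))

/-- The constraint `2(Q₈+2Q₉) = 5b₁`. -/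
def isoConstraint (μ : E2 → ℝ) (t l1 : ℝ) (Q8 Q9 : E2 → ℝ) : Prop :=
  ∀ x : E2, 2 * (Q8 x + 2 * Q9 x) = 5 * b1F μ t l1 x

/-- `S_h = {x ∈ S : dist(x,∂S) > h}`. -/
def innerSubset (S : Set E2) (h : ℝ) : Set E2 := {x ∈ S | h < infDist x (frontier S)}

/-- `dist(D, ∂Ω) ≥ d`. -/
def DistBoundGE (D Ω : Set E2) (d : ℝ) : Prop := ∀ x ∈ D, d ≤ infDist x (frontier Ω)


set_option maxHeartbeats 1000000
section StrongConvexAux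

lemma sum_pi2 (g : (Fin 2 → Fin 2) → ℝ) :
    ∑ f, g f = g ![0,0] + g ![0,1] + g ![1,0] + g ![1,1] := by
  rw [show (Finset.univ : Finset (Fin 2 → Fin 2)) = {![0,0], ![0,1], ![1,0], ![1,1]} from by decide]
  rw [Finset.sum_insert (by decide), Finset.sum_insert (by decide),
    Finset.sum_insert (by decide), Finset.sum_singleton]
  ring

lemma sum_pi3 (g : (Fin 3 → Fin 2) → ℝ) :
    ∑ f, g f = g ![0,0,0] + g ![0,0,1] + g ![0,1,0] + g ![0,1,1]
      + g ![1,0,0] + g ![1,0,1] + g ![1,1,0] + g ![1,1,1] := by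
  rw [show (Finset.univ : Finset (Fin 3 → Fin 2)) =
    {![0,0,0], ![0,0,1], ![0,1,0], ![0,1,1], ![1,0,0], ![1,0,1], ![1,1,0], ![1,1,1]} from by decide]
  rw [Finset.sum_insert (by decide), Finset.sum_insert (by decide), Finset.sum_insert (by decide),
    Finset.sum_insert (by decide), Finset.sum_insert (by decide), Finset.sum_insert (by decide),
    Finset.sum_insert (by decide), Finset.sum_singleton]
  ring

lemma symA (A : Tens 2) (hA : IsSym A) : A ![1,0] = A ![0,1] := by
  have := hA (Equiv.swap 0 1) ![0,1]
  rwa [show (![0,1] : Fin 2 → Fin 2) ∘ (Equiv.swap 0 1) = ![1,0] from by decide] at this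

lemma symB (B : Tens 3) (hB : IsSym B) :
    B ![0,1,0] = B ![0,0,1] ∧ B ![1,0,0] = B ![0,0,1] ∧
    B ![1,0,1] = B ![0,1,1] ∧ B ![1,1,0] = B ![0,1,1] := by
  refine ⟨?_, ?_, ?_, ?_⟩
  · have := hB (Equiv.swap 1 2) ![0,0,1]
    rwa [show (![0,0,1] : Fin 3 → Fin 2) ∘ (Equiv.swap 1 2) = ![0,1,0] from by decide] at this
  · have := hB (Equiv.swap 0 2) ![0,0,1]
    rwa [show (![0,0,1] : Fin 3 → Fin 2) ∘ (Equiv.swap 0 2) = ![1,0,0] from by decide] at this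
  · have := hB (Equiv.swap 0 1) ![0,1,1]
    rwa [show (![0,1,1] : Fin 3 → Fin 2) ∘ (Equiv.swap 0 1) = ![1,0,1] from by decide] at this
  · have := hB (Equiv.swap 0 2) ![0,1,1]
    rwa [show (![0,1,1] : Fin 3 → Fin 2) ∘ (Equiv.swap 0 2) = ![1,1,0] from by decide] at this

lemma qfP_eq (μ lam : E2 → ℝ) (t : ℝ) (x : E2) (A : Tens 2) (hA : IsSym A)
    (h1 : μ x + lam x ≠ 0) (h2 : 2*μ x + lam x ≠ 0) (h3 : 2*μ x + 3*lam x ≠ 0) :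
    qf (isoP μ lam t x) A =
      t^3 * μ x/6 * (((A ![0,0])^2 + 2*(A ![0,1])^2 + (A ![1,1])^2)
        + lam x/(2*μ x + lam x) * (A ![0,0] + A ![1,1])^2) := by
  have hs := symA A hA
  simp only [qf, tdot, tapply, sum_pi2, isoP, kron, BF, EyF, nuF]
  norm_num [hs]
  have hnu : (1:ℝ) - (lam x/(2*(μ x + lam x)))^2
      = (2*μ x + lam x)*(2*μ x+3*lam x)/(4*(μ x + lam x)^2) := by
    field_simp; ring
  rw [hnu]
  have h2' : μ x * 2 + lam x ≠ 0 := by rwa [mul_comm] at h2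
  have h3' : μ x * 2 + 3 * lam x ≠ 0 := by rwa [mul_comm] at h3
  field_simp
  ring

lemma qfPh_eq (μ : E2 → ℝ) (t l0 l1 l2 : ℝ) (x : E2) (A : Tens 2) (hA : IsSym A) :
    qf (isoPh μ t l0 l1 l2 x) A =
      (2*(μ x*t*l2^2) + 5*((2/15)*μ x*t*l1^2)) * ((A ![0,0])^2 + 2*(A ![0,1])^2 + (A ![1,1])^2)
      + (-((2/15)*μ x*t*l1^2) - μ x*t*l2^2 + 2*μ x*t*l0^2) * (A ![0,0] + A ![1,1])^2 := by
  have hs := symA A hA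
  simp only [qf, tdot, tapply, sum_pi2, isoPh, kron, a0F, a1F, a2F]
  norm_num [hs]
  ring

set_option maxRecDepth 20000 in
lemma qfQ_eq (μ : E2 → ℝ) (t l0 l1 : ℝ) (Q8 Q9 : E2 → ℝ) (x : E2) (B : Tens 3) (hB : IsSym B) :
    qf (isoQ μ t l0 l1 Q8 Q9 x) B =
      (2*μ x*(t^3/12)*l0^2 - 3*((2/5)*μ x*(t^3/12)*l1^2)) *
        ((B ![0,0,0] + B ![0,1,1])^2 + (B ![0,0,1] + B ![1,1,1])^2)
      + (2*Q8 x + 4*Q9 x) *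
        ((B ![0,0,0])^2 + 3*(B ![0,0,1])^2 + 3*(B ![0,1,1])^2 + (B ![1,1,1])^2) := by
  obtain ⟨h1, h2, h3, h4⟩ := symB B hB
  simp only [qf, tdot, tapply, sum_pi3, isoQ, kron, b0F, b1F]
  norm_num [h1, h2, h3, h4, Matrix.cons_val_two, Matrix.cons_val_one, Matrix.cons_val_zero, Matrix.tail_cons, Matrix.head_cons]
  ring

lemma qf_add {k : ℕ} (K1 K2 : TComp k) (A : Tens k) :
    qf (K1 + K2) A = qf K1 A + qf K2 A := by
  simp [qf, tdot, tapply, Pi.add_apply, add_mul, Finset.sum_add_distrib]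

lemma tnorm2_eq2 (A : Tens 2) (hA : IsSym A) :
    tnorm2 A = (A ![0,0])^2 + 2*(A ![0,1])^2 + (A ![1,1])^2 := by
  have hs := symA A hA
  simp only [tnorm2, tdot, sum_pi2, hs]
  ring

lemma tnorm2_eq3 (B : Tens 3) (hB : IsSym B) :
    tnorm2 B = (B ![0,0,0])^2 + 3*(B ![0,0,1])^2 + 3*(B ![0,1,1])^2 + (B ![1,1,1])^2 := by
  obtain ⟨h1, h2, h3, h4⟩ := symB B hB
  simp only [tnorm2, tdot, sum_pi3, h1, h2, h3, h4]
  ring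

lemma keyPineq (α0 γ0 m L t l l0 l1 l2 a b c : ℝ)
    (hα0 : 0 < α0) (hγ0 : 0 < γ0) (hm : α0 ≤ m) (hg : γ0 ≤ 2*m+3*L)
    (ht : 0 < t) (hl : 0 < l) (h0 : l ≤ l0) (h1 : l ≤ l1) (h2 : l ≤ l2) :
    t*(t^2+l^2) * (min α0 (γ0/2)/6) * (a^2+2*b^2+c^2) ≤
      t^3*m/6 * ((a^2+2*b^2+c^2) + L/(2*m+L)*(a+c)^2)
      + ((2*(m*t*l2^2) + 5*((2/15)*m*t*l1^2)) * (a^2+2*b^2+c^2)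
        + (-((2/15)*m*t*l1^2) - m*t*l2^2 + 2*m*t*l0^2) * (a+c)^2) := by
  set c0 := min α0 (γ0/2) with hc0
  have hc0α : c0 ≤ α0 := min_le_left _ _
  have hc0γ : c0 ≤ γ0/2 := min_le_right _ _
  have hc0pos : 0 < c0 := lt_min hα0 (by linarith)
  have hD : 0 < 2*m+L := by nlinarith
  have hkey : c0 * (2*m+L) ≤ m*(2*m+3*L) := by nlinarith
  have hP : t^3*c0/6 * (a^2+2*b^2+c^2) ≤ t^3*m/6 * ((a^2+2*b^2+c^2) + L/(2*m+L)*(a+c)^2) := by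
    rw [← sub_nonneg]
    have heq : t^3*m/6 * ((a^2+2*b^2+c^2) + L/(2*m+L)*(a+c)^2) - t^3*c0/6 * (a^2+2*b^2+c^2)
        = (t^3/6) * (((m-c0)*(a^2+2*b^2+c^2)*(2*m+L) + m*L*(a+c)^2) / (2*m+L)) := by
      have hD' : m * 2 + L ≠ 0 := (by linarith : 0 < m * 2 + L).ne'
      field_simp
      ring
    rw [heq]
    apply mul_nonneg (by positivity)
    apply div_nonneg _ hD.le
    have hA1 : 0 ≤ (m-c0)*(2*m+L)*(2*b^2+(a-c)^2/2) :=
      mul_nonneg (mul_nonneg (by linarith) hD.le) (by positivity)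
    have hA2 : 0 ≤ (a+c)^2 * (m*(2*m+3*L) - c0*(2*m+L)) :=
      mul_nonneg (sq_nonneg _) (by linarith)
    nlinarith [hA1, hA2]
  have hPh : (2/3)*α0*t*l^2 * (a^2+2*b^2+c^2) ≤
      (2*(m*t*l2^2) + 5*((2/15)*m*t*l1^2)) * (a^2+2*b^2+c^2)
        + (-((2/15)*m*t*l1^2) - m*t*l2^2 + 2*m*t*l0^2) * (a+c)^2 := by
    have hmpos : 0 < m := lt_of_lt_of_le hα0 hm
    have e1 : α0*l^2 ≤ m*l1^2 :=
      mul_le_mul hm (pow_le_pow_left₀ hl.le h1 2) (by positivity) hmpos.le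
    have e0 : α0*l^2 ≤ m*l0^2 :=
      mul_le_mul hm (pow_le_pow_left₀ hl.le h0 2) (by positivity) hmpos.le
    have hC1 : (2/3)*(α0*l^2)*t ≤ (2*(m*t*l2^2) + (2/3)*m*t*l1^2) := by
      linarith [mul_le_mul_of_nonneg_right e1 ht.le, mul_pos (mul_pos hmpos ht) (pow_pos (hl.trans_le h2) 2)]
    have hC2 : (1/3)*(α0*l^2)*t ≤ 2*m*t*l0^2 + (1/5)*m*t*l1^2 := by
      linarith [mul_le_mul_of_nonneg_right e0 ht.le, mul_pos (mul_pos hmpos ht) (pow_pos (hl.trans_le h1) 2),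
        mul_pos (mul_pos hmpos ht) (pow_pos (hl.trans_le h0) 2)]
    linarith [mul_le_mul_of_nonneg_right hC1 (by positivity : (0:ℝ) ≤ 2*b^2+(a-c)^2/2),
      mul_le_mul_of_nonneg_right hC2 (sq_nonneg (a+c))]
  have final : t*(t^2+l^2) * (c0/6) * (a^2+2*b^2+c^2) ≤
      t^3*c0/6 * (a^2+2*b^2+c^2) + (2/3)*α0*t*l^2 * (a^2+2*b^2+c^2) := by
    have hx : (0:ℝ) ≤ t*l^2*(a^2+2*b^2+c^2) := by positivity
    linarith [mul_le_mul_of_nonneg_right (show c0/6 ≤ (2/3)*α0 by linarith) hx]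
  linarith

lemma keyQineq (α0 m t l l0 l1 p q r s Q8 Q9 : ℝ)
    (hα0 : 0 < α0) (hm : α0 ≤ m) (ht : 0 < t) (hl : 0 < l) (h0 : l ≤ l0) (h1 : l ≤ l1)
    (hcon : 2*(Q8 + 2*Q9) = 5 * ((2/5)*m*(t^3/12)*l1^2)) :
    t^3*l^2*(α0/30) * (p^2+3*q^2+3*r^2+s^2) ≤
      (2*m*(t^3/12)*l0^2 - 3*((2/5)*m*(t^3/12)*l1^2)) * ((p+r)^2 + (q+s)^2)
      + (2*Q8 + 4*Q9) * (p^2+3*q^2+3*r^2+s^2) := by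
  have hmpos : 0 < m := lt_of_lt_of_le hα0 hm
  have hQ : 2*Q8 + 4*Q9 = m*t^3*l1^2/6 := by linarith
  rw [hQ]
  have e0 : l^2 ≤ l0^2 := by nlinarith
  have e1 : l^2 ≤ l1^2 := by nlinarith
  have hT : 3*((p+r)^2 + (q+s)^2) ≤ 4*(p^2+3*q^2+3*r^2+s^2) := by
    nlinarith [sq_nonneg (p-3*r), sq_nonneg (s-3*q)]
  have hb0 : 0 ≤ 2*m*(t^3/12)*l0^2 := by positivity
  nlinarith [mul_nonneg hb0 (by positivity : (0:ℝ) ≤ (p+r)^2+(q+s)^2),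
    mul_le_mul_of_nonneg_left e1 (by positivity : (0:ℝ) ≤ m*t^3/30),
    mul_le_mul_of_nonneg_left hm (by positivity : (0:ℝ) ≤ t^3*l^2/30),
    mul_nonneg (by positivity : (0:ℝ) ≤ m*t^3*l1^2/30) (sub_nonneg.2 hT),
    mul_nonneg (mul_nonneg hmpos.le (by positivity : (0:ℝ) ≤ t^3)) (sq_nonneg l)]

end StrongConvexAux

/-- Strong convexity of the isotropic tensors, eqs. (3.26)-(3.28)
of the paper. If `μ ≥ α₀ > 0` and `2μ+3λ ≥ γ₀ > 0` a.e. in `Ω`, then, with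
`l = min{l₀,l₁,l₂}`: `aᵢ ≥ t l² (2/15)α₀` for `i = 0,1,2`, `bⱼ ≥ t³ l² (1/30)α₀` for
`j = 0,1` a.e. in `Ω`, and there exist `ξ_𝓟, ξ_𝓠 > 0` depending only on `α₀, γ₀` with
`(𝓟+𝓟^h)A·A ≥ t(t²+l²)ξ_𝓟|A|²` for all symmetric `A ∈ M̂²` and
`𝓠B·B ≥ t³l²ξ_𝓠|B|²` for all symmetric `B ∈ M̂³`, a.e. in `Ω`. -/
theorem statement_10 (α0 γ0 : ℝ) (hα0 : 0 < α0) (hγ0 : 0 < γ0) :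
    ∃ ξP > 0, ∃ ξQ > 0,
      ∀ (t l0 l1 l2 : ℝ) (μ lam Q8 Q9 : E2 → ℝ) (Ω : Set E2),
      0 < t → 0 < l0 → 0 < l1 → 0 < l2 →
      isoConstraint μ t l1 Q8 Q9 →
      (∀ᵐ x ∂(volume.restrict Ω), α0 ≤ μ x ∧ γ0 ≤ 2 * μ x + 3 * lam x) →
      (∀ᵐ x ∂(volume.restrict Ω),
        (t * min l0 (min l1 l2) ^ 2 * ((2:ℝ) / 15) * α0 ≤ a0F μ t l0 x ∧
          t * min l0 (min l1 l2) ^ 2 * ((2:ℝ) / 15) * α0 ≤ a1F μ t l1 x ∧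
          t * min l0 (min l1 l2) ^ 2 * ((2:ℝ) / 15) * α0 ≤ a2F μ t l2 x) ∧
        (t ^ 3 * min l0 (min l1 l2) ^ 2 * ((1:ℝ) / 30) * α0 ≤ b0F μ t l0 x ∧
          t ^ 3 * min l0 (min l1 l2) ^ 2 * ((1:ℝ) / 30) * α0 ≤ b1F μ t l1 x)) ∧
      (∀ᵐ x ∂(volume.restrict Ω),
        (∀ A : Tens 2, IsSym A →
          t * (t ^ 2 + min l0 (min l1 l2) ^ 2) * ξP * tnorm2 A ≤
            qf (isoP μ lam t x + isoPh μ t l0 l1 l2 x) A) ∧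
        (∀ B : Tens 3, IsSym B →
          t ^ 3 * min l0 (min l1 l2) ^ 2 * ξQ * tnorm2 B ≤
            qf (isoQ μ t l0 l1 Q8 Q9 x) B)) := by
  refine ⟨min α0 (γ0/2)/6, div_pos (lt_min hα0 (by linarith)) (by norm_num), α0/30,
    by positivity, ?_⟩
  intro t l0 l1 l2 μ lam Q8 Q9 Ω ht hl0 hl1 hl2 hcon hae
  have hl : 0 < min l0 (min l1 l2) := lt_min hl0 (lt_min hl1 hl2)
  have hle0 : min l0 (min l1 l2) ≤ l0 := min_le_left _ _
  have hle1 : min l0 (min l1 l2) ≤ l1 := (min_le_right _ _).trans (min_le_left _ _)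
  have hle2 : min l0 (min l1 l2) ≤ l2 := (min_le_right _ _).trans (min_le_right _ _)
  set l := min l0 (min l1 l2) with hldef
  constructor
  · filter_upwards [hae] with x hx
    obtain ⟨hm, hg⟩ := hx
    have hmpos : 0 < μ x := lt_of_lt_of_le hα0 hm
    have e0 : α0*l^2 ≤ μ x*l0^2 :=
      mul_le_mul hm (pow_le_pow_left₀ hl.le hle0 2) (by positivity) hmpos.le
    have e1 : α0*l^2 ≤ μ x*l1^2 :=
      mul_le_mul hm (pow_le_pow_left₀ hl.le hle1 2) (by positivity) hmpos.le
    have e2 : α0*l^2 ≤ μ x*l2^2 :=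
      mul_le_mul hm (pow_le_pow_left₀ hl.le hle2 2) (by positivity) hmpos.le
    have p0 : 0 < μ x * l0^2 := by positivity
    have p1 : 0 < μ x * l1^2 := by positivity
    have p2 : 0 < μ x * l2^2 := by positivity
    have ht3 : (0:ℝ) ≤ t^3 := by positivity
    refine ⟨⟨?_, ?_, ?_⟩, ?_, ?_⟩
    · simp only [a0F]
      nlinarith [mul_le_mul_of_nonneg_right e0 ht.le, mul_pos p0 ht]
    · simp only [a1F]
      nlinarith [mul_le_mul_of_nonneg_right e1 ht.le, mul_pos p1 ht]
    · simp only [a2F]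
      nlinarith [mul_le_mul_of_nonneg_right e2 ht.le, mul_pos p2 ht]
    · simp only [b0F]
      nlinarith [mul_le_mul_of_nonneg_right e0 ht3, mul_nonneg p0.le ht3]
    · simp only [b1F]
      nlinarith [mul_le_mul_of_nonneg_right e1 ht3, mul_nonneg p1.le ht3]
  · filter_upwards [hae] with x hx
    obtain ⟨hm, hg⟩ := hx
    have hmpos : 0 < μ x := lt_of_lt_of_le hα0 hm
    have hML : 0 < μ x + lam x := by nlinarith
    have h2ML : 0 < 2*μ x + lam x := by nlinarith
    have h2M3L : 0 < 2*μ x + 3*lam x := by linarith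
    constructor
    · intro A hA
      rw [qf_add, qfP_eq μ lam t x A hA hML.ne' h2ML.ne' h2M3L.ne',
        qfPh_eq μ t l0 l1 l2 x A hA, tnorm2_eq2 A hA]
      exact keyPineq α0 γ0 (μ x) (lam x) t l l0 l1 l2 (A ![0,0]) (A ![0,1]) (A ![1,1])
        hα0 hγ0 hm hg ht hl hle0 hle1 hle2
    · intro B hB
      rw [qfQ_eq μ t l0 l1 Q8 Q9 x B hB, tnorm2_eq3 B hB]
      have hc := hcon x
      simp only [b1F] at hc
      exact keyQineq α0 (μ x) t l l0 l1 (B ![0,0,0]) (B ![0,0,1]) (B ![0,1,1]) (B ![1,1,1])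
        (Q8 x) (Q9 x) hα0 hm ht hl hle0 hle1 hc
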